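/- arXiv:2601.03133 — 3 statements merged into one kernel-verified Lean document; each statement's English description precedes it below -/
import Mathlib

section
/- The function B(s) = K₀(s/√(1+νs+κ²s²)) / K₁(s/√(1+νs+κ²s²)) satisfies |B(s)| ≤ 1 for every s in the open right half-plane ℂ₀ = {s : Re(s) > 0}, where the square root is the principal branch. -/
open MeasureTheory

/-- Modified Bessel function of the second kind of order `α` (complex argument),
via `K_α(z) = ∫₀^∞ e^{-z cosh t} cosh(α t) dt` (absolutely convergent for `Re z > 0`). -/
noncomputable def cbesselK (α : ℝ) (z : ℂ) : ℂ :=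
  ∫ t in Set.Ioi (0 : ℝ), Complex.exp (-z * (Real.cosh t : ℂ)) * (Real.cosh (α * t) : ℂ)

/-!
For `Re z > 0`, differentiating under the integral gives `K₀' = -K₁` and, after an integration
by parts, `K₁' = -K₀ - K₁ / z`. Along the horizontal ray `u ↦ u + i Im z` the function
`‖K₁‖² - ‖K₀‖²` therefore has derivative `-2 ‖K₁‖² Re (1 / z) ≤ 0`, and it tends to `0` as
`u → ∞`; so it is nonnegative, i.e. `‖K₀ z‖ ≤ ‖K₁ z‖`. It remains to see that
`z = s / √w`, `w = 1 + ν s + κ² s²`, has positive real part: `w` avoids `(-∞, 0]`, so `r = √w`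
has `Re r > 0`, and `Im w = 2 Re r Im r` has the sign of `Im s`, whence `Re (s r̄) > 0`.
-/

open Set Filter Topology Real
open scoped Complex

lemma Real.one_add_sq_div_two_le_cosh (t : ℝ) : 1 + t ^ 2 / 2 ≤ cosh t := by
  have hsinh : |t / 2| ≤ sinh |t / 2| := self_le_sinh_iff.2 (abs_nonneg _)
  have hsq : (t / 2) ^ 2 ≤ sinh (t / 2) ^ 2 := by
    rw [← sq_abs, ← sq_abs (sinh _), abs_sinh]
    exact pow_le_pow_left₀ (abs_nonneg _) hsinh 2
  have hcosh : cosh t = 1 + 2 * sinh (t / 2) ^ 2 := by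
    have := cosh_two_mul (t / 2)
    rw [mul_div_cancel₀ t two_ne_zero, cosh_sq] at this
    linarith
  nlinarith

lemma Real.cosh_le_exp_abs (x : ℝ) : cosh x ≤ exp |x| := by
  rw [← cosh_abs, cosh_eq]
  linarith [exp_le_exp.2 (neg_le_self (abs_nonneg x))]

lemma neg_mul_cosh_add_mul_le {x : ℝ} (hx : 0 < x) (β t : ℝ) :
    -(x * cosh t) + β * t ≤ -x + (β + 1) ^ 2 / (2 * x) - t := by
  have hcosh := mul_le_mul_of_nonneg_left (one_add_sq_div_two_le_cosh t) hx.le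
  -- AM-GM on `(β + 1) * t`, which absorbs the linear term into the Gaussian decay.
  have hamgm : (β + 1) * t ≤ (β + 1) ^ 2 / (2 * x) + x * t ^ 2 / 2 := by
    rw [div_add' _ _ _ (by positivity), le_div_iff₀ (by positivity)]
    nlinarith [sq_nonneg (β + 1 - x * t)]
  nlinarith

lemma integrableOn_exp_neg_mul_cosh_add_mul {x : ℝ} (hx : 0 < x) (β : ℝ) :
    IntegrableOn (fun t => exp (-(x * cosh t) + β * t)) (Ioi 0) := by
  refine ((exp_neg_integrableOn_Ioi 0 one_pos).const_mul
    (exp (-x + (β + 1) ^ 2 / (2 * x)))).mono' (by fun_prop) (ae_of_all _ fun t => ?_)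
  rw [norm_of_nonneg (exp_pos _).le, ← exp_add, exp_le_exp]
  linarith [neg_mul_cosh_add_mul_le hx β t]

lemma norm_cexp_neg_mul_cosh (z : ℂ) (t : ℝ) :
    ‖cexp (-z * cosh t)‖ = exp (-(z.re * cosh t)) := by
  simp [Complex.norm_exp, Complex.mul_re]

lemma integrableOn_cexp_neg_mul_cosh_mul {z : ℂ} (hz : 0 < z.re) {g : ℝ → ℂ}
    (hg : Continuous g) {β : ℝ} (hgb : ∀ t > 0, ‖g t‖ ≤ exp (β * t)) :
    IntegrableOn (fun t => cexp (-z * cosh t) * g t) (Ioi 0) := by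
  refine (integrableOn_exp_neg_mul_cosh_add_mul hz β).mono' (by fun_prop) ?_
  filter_upwards [ae_restrict_mem measurableSet_Ioi] with t ht
  rw [norm_mul, norm_cexp_neg_mul_cosh, exp_add]
  exact mul_le_mul_of_nonneg_left (hgb t ht) (exp_pos _).le

lemma norm_cosh_mul_le_exp {t : ℝ} (ht : 0 ≤ t) (α : ℝ) :
    ‖(cosh (α * t) : ℂ)‖ ≤ exp (|α| * t) := by
  rw [Complex.norm_real, norm_of_nonneg (cosh_pos _).le]
  simpa [abs_mul, abs_of_nonneg ht] using cosh_le_exp_abs (α * t)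

lemma norm_sinh_le_exp {t : ℝ} (ht : 0 ≤ t) : ‖(sinh t : ℂ)‖ ≤ exp t := by
  rw [Complex.norm_real, norm_of_nonneg (sinh_nonneg_iff.2 ht), sinh_eq]
  linarith [exp_pos (-t), exp_pos t]

lemma integrableOn_cexp_neg_mul_cosh_mul_sinh_sq {z : ℂ} (hz : 0 < z.re) :
    IntegrableOn (fun t => cexp (-z * cosh t) * (sinh t : ℂ) ^ 2) (Ioi 0) :=
  integrableOn_cexp_neg_mul_cosh_mul hz (β := 2) (by fun_prop) fun t ht => by
    rw [norm_pow, two_mul, exp_add, ← sq]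
    exact pow_le_pow_left₀ (norm_nonneg _) (norm_sinh_le_exp ht.le) 2

lemma nonneg_of_hasDerivAt_nonpos_of_tendsto_zero {g g' : ℝ → ℝ} {a : ℝ}
    (hg : ∀ x ≥ a, HasDerivAt g (g' x) x) (hg' : ∀ x ≥ a, g' x ≤ 0)
    (hlim : Tendsto g atTop (𝓝 0)) : 0 ≤ g a := by
  have hanti : AntitoneOn g (Ici a) := by
    refine antitoneOn_of_deriv_nonpos (convex_Ici a)
      (fun x hx => (hg x hx).continuousAt.continuousWithinAt) ?_ ?_ <;> rw [interior_Ici]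
    · exact fun x hx => (hg x hx.le).differentiableAt.differentiableWithinAt
    · exact fun x hx => (hg x hx.le).deriv ▸ hg' x hx.le
  exact le_of_tendsto hlim ((eventually_ge_atTop a).mono fun x hx =>
    hanti self_mem_Ici hx hx)

namespace cbesselK

theorem integrableOn (α : ℝ) {z : ℂ} (hz : 0 < z.re) :
    IntegrableOn (fun t => cexp (-z * cosh t) * cosh (α * t)) (Ioi 0) :=
  integrableOn_cexp_neg_mul_cosh_mul hz (by fun_prop) fun t ht => norm_cosh_mul_le_exp ht.le α

theorem hasDerivAt (α : ℝ) {z : ℂ} (hz : 0 < z.re) :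
    HasDerivAt (cbesselK α)
      (-∫ t in Ioi 0, cexp (-z * cosh t) * (cosh t * cosh (α * t))) z := by
  set F' : ℂ → ℝ → ℂ := fun w t => -(cexp (-w * cosh t) * (cosh t * cosh (α * t)))
  have hball : ∀ w ∈ Metric.ball z (z.re / 2), z.re / 2 ≤ w.re := fun w hw => by
    rw [Metric.mem_ball, Complex.dist_eq] at hw
    have := (Complex.abs_re_le_norm (w - z)).trans hw.le
    rw [Complex.sub_re, abs_le] at this
    linarith
  have hbound : ∀ t > 0, ∀ w ∈ Metric.ball z (z.re / 2),
      ‖F' w t‖ ≤ exp (-(z.re / 2 * cosh t) + (1 + |α|) * t) := fun t ht w hw => by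
    have hcosh : ‖(cosh t : ℂ)‖ ≤ exp t := by
      simpa using norm_cosh_mul_le_exp ht.le 1
    rw [norm_neg, norm_mul, norm_mul, norm_cexp_neg_mul_cosh, exp_add, add_mul, one_mul, exp_add]
    gcongr
    · exact hball w hw
    · exact norm_cosh_mul_le_exp ht.le α
  have hderiv : ∀ t : ℝ, ∀ w : ℂ,
      HasDerivAt (fun w => cexp (-w * cosh t) * cosh (α * t)) (F' w t) w := fun t w => by
    refine (((hasDerivAt_id' w).neg.mul_const (cosh t : ℂ)).cexp.mul_const
      (cosh (α * t) : ℂ)).congr_deriv ?_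
    simp only [F', Pi.neg_apply]
    ring
  have key := hasDerivAt_integral_of_dominated_loc_of_deriv_le
    (μ := volume.restrict (Ioi 0)) (F := fun w t => cexp (-w * cosh t) * cosh (α * t))
    (F' := F') (Metric.ball_mem_nhds z (by positivity))
    (Eventually.of_forall fun w => (by fun_prop : Continuous _).aestronglyMeasurable)
    (integrableOn α hz) (by fun_prop : Continuous (F' z)).aestronglyMeasurable
    ((ae_restrict_mem measurableSet_Ioi).mono hbound)
    (integrableOn_exp_neg_mul_cosh_add_mul (by positivity) _)
    (ae_of_all _ fun t w _ => hderiv t w)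
  rw [← integral_neg]
  exact key.2

theorem integral_cexp_neg_mul_cosh_mul_sinh_sq {z : ℂ} (hz : 0 < z.re) :
    ∫ t in Ioi 0, cexp (-z * cosh t) * (sinh t : ℂ) ^ 2 = cbesselK 1 z / z := by
  have hz0 : z ≠ 0 := fun h => by simp [h] at hz
  have hcosh : IntegrableOn (fun t => cexp (-z * cosh t) * cosh t) (Ioi 0) := by
    simpa using integrableOn 1 hz
  have hsinh_sq := integrableOn_cexp_neg_mul_cosh_mul_sinh_sq hz
  have hderiv : ∀ t ∈ Ici (0 : ℝ), HasDerivAt (fun t => cexp (-z * cosh t) * sinh t)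
      (cexp (-z * cosh t) * cosh t - z * (cexp (-z * cosh t) * (sinh t : ℂ) ^ 2)) t :=
    fun t _ => by
      refine ((((hasDerivAt_cosh t).ofReal_comp).const_mul (-z)).cexp.mul
        (hasDerivAt_sinh t).ofReal_comp).congr_deriv ?_
      ring
  have hlim : Tendsto (fun t => cexp (-z * cosh t) * sinh t) atTop (𝓝 0) := by
    have hdecay := tendsto_exp_neg_atTop_nhds_zero.const_mul
      (exp (-z.re + (1 + 1) ^ 2 / (2 * z.re)))
    rw [mul_zero] at hdecay
    refine squeeze_zero_norm' ?_ hdecay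
    filter_upwards [eventually_gt_atTop 0] with t ht
    rw [norm_mul, norm_cexp_neg_mul_cosh, ← exp_add]
    calc exp (-(z.re * cosh t)) * ‖(sinh t : ℂ)‖ ≤ exp (-(z.re * cosh t)) * exp (1 * t) := by
          rw [one_mul]
          exact mul_le_mul_of_nonneg_left (norm_sinh_le_exp ht.le) (exp_pos _).le
      _ ≤ exp (-z.re + (1 + 1) ^ 2 / (2 * z.re) + -t) := by
          rw [← exp_add, exp_le_exp]
          linarith [neg_mul_cosh_add_mul_le hz 1 t]
  have hibp := integral_Ioi_of_hasDerivAt_of_tendsto' hderiv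
    (hcosh.sub (hsinh_sq.const_mul z)) hlim
  rw [integral_sub hcosh (hsinh_sq.const_mul z), integral_const_mul, sinh_zero,
    Complex.ofReal_zero, mul_zero, sub_zero] at hibp
  have hK1 : cbesselK 1 z = ∫ t in Ioi 0, cexp (-z * cosh t) * cosh t := by
    simp [cbesselK]
  rw [eq_div_iff hz0, hK1]
  linear_combination -hibp

theorem hasDerivAt_zero {z : ℂ} (hz : 0 < z.re) :
    HasDerivAt (cbesselK 0) (-cbesselK 1 z) z := by
  simpa [cbesselK] using hasDerivAt 0 hz

theorem hasDerivAt_one {z : ℂ} (hz : 0 < z.re) :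
    HasDerivAt (cbesselK 1) (-(cbesselK 0 z + cbesselK 1 z / z)) z := by
  have hsplit : ∀ t : ℝ, cexp (-z * cosh t) * (cosh t * cosh (1 * t)) =
      cexp (-z * cosh t) * cosh (0 * t) + cexp (-z * cosh t) * (sinh t : ℂ) ^ 2 := fun t => by
    have hcosh_sq : (cosh t : ℂ) ^ 2 = (sinh t : ℂ) ^ 2 + 1 := by exact_mod_cast cosh_sq t
    rw [one_mul, zero_mul, cosh_zero, Complex.ofReal_one]
    linear_combination cexp (-z * cosh t) * hcosh_sq
  convert hasDerivAt 1 hz using 2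
  rw [integral_congr_ae (ae_of_all _ hsplit),
    integral_add (integrableOn 0 hz) (integrableOn_cexp_neg_mul_cosh_mul_sinh_sq hz),
    integral_cexp_neg_mul_cosh_mul_sinh_sq hz]
  rfl

theorem norm_le_exp_neg_mul (α : ℝ) {z : ℂ} (hz : 1 ≤ z.re) :
    ‖cbesselK α z‖ ≤ exp (-(z.re - 1)) * ∫ t in Ioi 0, exp (-(1 * cosh t) + |α| * t) := by
  rw [← integral_const_mul]
  refine norm_integral_le_of_norm_le
    ((integrableOn_exp_neg_mul_cosh_add_mul one_pos |α|).const_mul _) ?_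
  filter_upwards [ae_restrict_mem measurableSet_Ioi] with t ht
  rw [norm_mul, norm_cexp_neg_mul_cosh, ← exp_add]
  calc exp (-(z.re * cosh t)) * ‖(cosh (α * t) : ℂ)‖
      ≤ exp (-(z.re * cosh t)) * exp (|α| * t) :=
        mul_le_mul_of_nonneg_left (norm_cosh_mul_le_exp ht.le α) (exp_pos _).le
    _ ≤ exp (-(z.re - 1) + (-(1 * cosh t) + |α| * t)) := by
        rw [← exp_add, exp_le_exp]
        nlinarith [one_le_cosh t]

theorem tendsto_comap_re_atTop (α : ℝ) :
    Tendsto (cbesselK α) (comap Complex.re atTop) (𝓝 0) := by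
  have hre : Tendsto (fun z : ℂ => z.re - 1) (comap Complex.re atTop) atTop :=
    tendsto_atTop_add_const_right _ _ tendsto_comap
  have hdecay := (tendsto_exp_neg_atTop_nhds_zero.comp hre).mul_const
    (∫ t in Ioi 0, exp (-(1 * cosh t) + |α| * t))
  rw [zero_mul] at hdecay
  refine squeeze_zero_norm' ?_ hdecay
  filter_upwards [(eventually_ge_atTop 1).comap Complex.re] with z hz
  exact norm_le_exp_neg_mul α hz

theorem hasDerivAt_norm_sq_sub_norm_sq (y : ℝ) {x : ℝ} (hx : 0 < x) :
    HasDerivAt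
      (fun u : ℝ => ‖cbesselK 1 (u + y * Complex.I)‖ ^ 2 - ‖cbesselK 0 (u + y * Complex.I)‖ ^ 2)
      (-2 * ‖cbesselK 1 (x + y * Complex.I)‖ ^ 2 * ((x + y * Complex.I : ℂ)⁻¹).re) x := by
  have hz : 0 < ((x : ℂ) + y * Complex.I).re := by simpa using hx
  have h0 := ((hasDerivAt_zero hz).comp_add_const (x := (x : ℂ)) (y * Complex.I)).comp_ofReal
  have h1 := ((hasDerivAt_one hz).comp_add_const (x := (x : ℂ)) (y * Complex.I)).comp_ofReal
  refine (h1.norm_sq.sub h0.norm_sq).congr_deriv ?_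
  simp only [Complex.inner, Complex.sq_norm, Complex.normSq_apply, Complex.mul_re,
    Complex.mul_im, Complex.neg_re, Complex.neg_im, Complex.add_re, Complex.add_im,
    Complex.conj_re, Complex.conj_im, div_eq_mul_inv]
  ring

theorem norm_zero_le_norm_one {z : ℂ} (hz : 0 < z.re) : ‖cbesselK 0 z‖ ≤ ‖cbesselK 1 z‖ := by
  have hray : Tendsto (fun u : ℝ => (u : ℂ) + z.im * Complex.I) atTop (comap Complex.re atTop) :=
    tendsto_comap_iff.2 <| tendsto_id.congr fun u => by simp
  have hlim := (((tendsto_comap_re_atTop 1).comp hray).norm.pow 2).sub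
    (((tendsto_comap_re_atTop 0).comp hray).norm.pow 2)
  rw [norm_zero, zero_pow two_ne_zero, sub_zero] at hlim
  have hnonneg := nonneg_of_hasDerivAt_nonpos_of_tendsto_zero
    (fun x hx => hasDerivAt_norm_sq_sub_norm_sq z.im (hz.trans_le hx)) (fun x hx => ?_) hlim
  · rw [Complex.re_add_im, sub_nonneg] at hnonneg
    exact pow_le_pow_iff_left₀ (norm_nonneg _) (norm_nonneg _) two_ne_zero |>.1 hnonneg
  · have : 0 ≤ ((x + z.im * Complex.I : ℂ)⁻¹).re := by
      rw [Complex.inv_re]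
      exact div_nonneg (by simpa using hz.le.trans hx) (Complex.normSq_nonneg _)
    have := sq_nonneg ‖cbesselK 1 (x + z.im * Complex.I)‖
    nlinarith

end cbesselK

lemma Complex.re_cpow_one_half_pos {w : ℂ} (hw : w ∈ slitPlane) : 0 < (w ^ (1 / 2 : ℂ)).re := by
  rw [cpow_def_of_ne_zero (slitPlane_ne_zero hw), exp_re]
  refine mul_pos (Real.exp_pos _) (Real.cos_pos_of_mem_Ioo ⟨?_, ?_⟩) <;>
    simp only [mul_im, log_re, log_im, one_div, inv_re, inv_im] <;> norm_num
  · linarith [neg_pi_lt_arg w, Real.pi_pos]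
  · linarith [(arg_le_pi w).lt_of_ne (slitPlane_arg_ne_pi hw), Real.pi_pos]

lemma Complex.re_div_pos_of_im_mul_im_sq_nonneg {s r : ℂ} (hs : 0 < s.re) (hr : 0 < r.re)
    (h : 0 ≤ s.im * (r ^ 2).im) : 0 < (s / r).re := by
  have him : 0 ≤ s.im * r.im := by
    rw [sq, mul_im] at h
    nlinarith
  rw [div_re, ← add_div]
  exact div_pos (by nlinarith) (normSq_pos.2 fun h => by simp [h] at hr)

section Quadratic

variable {ν : ℝ} (κ : ℝ) {s : ℂ}

lemma re_one_add_mul_add_sq_mul_sq :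
    (1 + (ν : ℂ) * s + (κ : ℂ) ^ 2 * s ^ 2).re = 1 + ν * s.re + κ ^ 2 * (s.re ^ 2 - s.im ^ 2) := by
  simp only [Complex.add_re, Complex.mul_re, Complex.one_re, Complex.ofReal_re,
    Complex.ofReal_im, sq, Complex.mul_im]
  ring

lemma im_one_add_mul_add_sq_mul_sq :
    (1 + (ν : ℂ) * s + (κ : ℂ) ^ 2 * s ^ 2).im = s.im * (ν + 2 * κ ^ 2 * s.re) := by
  simp only [Complex.add_im, Complex.mul_im, Complex.one_im, Complex.ofReal_re,
    Complex.ofReal_im, sq, Complex.mul_re]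
  ring

lemma one_add_mul_add_sq_mul_sq_mem_slitPlane (hν : 0 ≤ ν) (hs : 0 < s.re) :
    1 + (ν : ℂ) * s + (κ : ℂ) ^ 2 * s ^ 2 ∈ Complex.slitPlane := by
  rw [Complex.mem_slitPlane_iff, re_one_add_mul_add_sq_mul_sq, im_one_add_mul_add_sq_mul_sq]
  by_cases him : s.im * (ν + 2 * κ ^ 2 * s.re) = 0
  · left
    rcases mul_eq_zero.1 him with h | h
    · rw [h]
      nlinarith [mul_nonneg hν hs.le, sq_nonneg (κ * s.re)]
    · have hκ : κ ^ 2 = 0 := by nlinarith [sq_nonneg κ]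
      have hν0 : ν = 0 := by nlinarith
      simp [hκ, hν0]
  · exact Or.inr him

lemma im_mul_im_one_add_mul_add_sq_mul_sq_nonneg (hν : 0 ≤ ν) (hs : 0 ≤ s.re) :
    0 ≤ s.im * (1 + (ν : ℂ) * s + (κ : ℂ) ^ 2 * s ^ 2).im := by
  rw [im_one_add_mul_add_sq_mul_sq, ← mul_assoc, ← sq]
  positivity

end Quadratic

theorem abs_B_le_one_general (ν κ : ℝ) (hν : 0 ≤ ν) (s : ℂ) (hs : 0 < s.re) :
    ‖(cbesselK 0 (s / ((1 + (ν : ℂ) * s + (κ : ℂ) ^ 2 * s ^ 2) ^ (1 / 2 : ℂ))) /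
       cbesselK 1 (s / ((1 + (ν : ℂ) * s + (κ : ℂ) ^ 2 * s ^ 2) ^ (1 / 2 : ℂ))))‖ ≤ 1 := by
  set w : ℂ := 1 + (ν : ℂ) * s + (κ : ℂ) ^ 2 * s ^ 2
  have hsq : (w ^ (1 / 2 : ℂ)) ^ 2 = w := by
    rw [one_div, Complex.cpow_ofNat_inv_pow]
  have hz : 0 < (s / w ^ (1 / 2 : ℂ)).re :=
    Complex.re_div_pos_of_im_mul_im_sq_nonneg hs
      (Complex.re_cpow_one_half_pos (one_add_mul_add_sq_mul_sq_mem_slitPlane κ hν hs))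
      (by rw [hsq]; exact im_mul_im_one_add_mul_add_sq_mul_sq_nonneg κ hν hs.le)
  rw [norm_div]
  exact div_le_one_of_le₀ (cbesselK.norm_zero_le_norm_one hz) (norm_nonneg _)

/-- `B(s) = K₀(s/√(1+νs+κ²s²)) / K₁(s/√(1+νs+κ²s²))` satisfies `|B(s)| ≤ 1` on the
open right half-plane; the square root is the principal branch `w ^ (1/2 : ℂ)`. -/
theorem abs_B_le_one (ν κ : ℝ) (hν : 0 ≤ ν) (hκ : 0 ≤ κ) (s : ℂ) (hs : 0 < s.re) :
    ‖(cbesselK 0 (s / ((1 + (ν : ℂ) * s + (κ : ℂ) ^ 2 * s ^ 2) ^ (1 / 2 : ℂ))) /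
       cbesselK 1 (s / ((1 + (ν : ℂ) * s + (κ : ℂ) ^ 2 * s ^ 2) ^ (1 / 2 : ℂ))))‖ ≤ 1 :=
  abs_B_le_one_general ν κ hν s hs
end

section
/- Let ν ≥ 0 and κ ≥ 0. If s = η + iω with η > 0, then p(s) := s/√(1 + νs + κ²s²) (with the principal square root) satisfies p(s) ∉ ℝ⁻, i.e. p(s) is not a nonpositive real number. -/
/-- For `ν, κ ≥ 0` and `s = η + iω` with `η = Re s > 0`, the quantity
`p(s) = s / √(1+νs+κ²s²)` (principal square root, i.e. `w ^ (1/2 : ℂ)`)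
is not a nonpositive real number. -/
theorem p_not_nonpos_real (ν κ : ℝ) (hν : 0 ≤ ν) (hκ : 0 ≤ κ) (s : ℂ) (hs : 0 < s.re) :
    ¬ ((s / ((1 + (ν : ℂ) * s + (κ : ℂ) ^ 2 * s ^ 2) ^ (1 / 2 : ℂ))).im = 0 ∧
       (s / ((1 + (ν : ℂ) * s + (κ : ℂ) ^ 2 * s ^ 2) ^ (1 / 2 : ℂ))).re ≤ 0) := by
  rintro ⟨him, hre⟩
  set w : ℂ := 1 + (ν : ℂ) * s + (κ : ℂ) ^ 2 * s ^ 2 with hw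
  have hwim : w.im = s.im * (ν + 2 * κ ^ 2 * s.re) := by
    simp [hw, Complex.add_im, Complex.mul_im, pow_two, Complex.mul_re]
    ring
  have hwre : w.re = 1 + ν * s.re + κ ^ 2 * (s.re ^ 2 - s.im ^ 2) := by
    simp [hw, Complex.add_re, Complex.mul_re, pow_two, Complex.mul_im]
  have hw0 : w ≠ 0 := by
    intro h0
    have h1 : w.im = 0 := by rw [h0]; simp
    have h2 : w.re = 0 := by rw [h0]; simp
    rw [hwim] at h1
    rw [hwre] at h2
    rcases mul_eq_zero.1 h1 with h | h
    · rw [h] at h2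
      nlinarith [sq_nonneg (κ * s.re), mul_nonneg hν hs.le]
    · nlinarith [sq_nonneg κ, sq_nonneg s.im]
  set r : ℂ := w ^ (1 / 2 : ℂ) with hr
  have hr0 : r ≠ 0 := by
    rw [hr, Complex.cpow_def_of_ne_zero hw0]
    exact Complex.exp_ne_zero _
  have hrre : 0 ≤ r.re := by
    rw [hr, Complex.cpow_def_of_ne_zero hw0]
    rw [Complex.exp_re]
    apply mul_nonneg (Real.exp_nonneg _)
    have : (Complex.log w * (1 / 2 : ℂ)).im = w.arg / 2 := by
      simp [Complex.mul_im, Complex.log_im]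
      ring
    rw [this]
    apply Real.cos_nonneg_of_mem_Icc
    constructor
    · linarith [Complex.neg_pi_lt_arg w, Real.pi_pos]
    · linarith [Complex.arg_le_pi w]
  have hsr : s = (s / r) * r := (div_mul_cancel₀ s hr0).symm
  have : s.re = (s / r).re * r.re := by
    conv_lhs => rw [hsr]
    rw [Complex.mul_re, him]
    ring
  nlinarith [mul_nonpos_of_nonpos_of_nonneg hre hrre]
end

section
/- Fix R > 0, and let K₀ and K₁ : (0,∞) → (0,∞) be the functions of the text, with K₁(x) ~ √(π/(2x))·e^{−x} as x → ∞ (with the quantitative bound valid uniformly). Then there exists C > 0, depending only on R, such that for all κ ∈ (0,1] and all r ≥ 2R, 0 < K₀(r/κ)/K₁(R/κ) ≤ C·√(R/r)·e^{−(r−R)/κ}. -/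
open MeasureTheory

/-- Modified Bessel function of the second kind of order `α` (real argument),
via `K_α(x) = ∫₀^∞ e^{-x cosh t} cosh(α t) dt`. -/
noncomputable def besselK (α x : ℝ) : ℝ :=
  ∫ t in Set.Ioi (0 : ℝ), Real.exp (-x * Real.cosh t) * Real.cosh (α * t)

lemma cosh_lower (t : ℝ) : 1 + t ^ 2 / 8 ≤ Real.cosh t := by
  have h0 : (0:ℝ) ≤ |t| := abs_nonneg t
  have h1 : |t| / 2 + 1 ≤ Real.exp (|t| / 2) := Real.add_one_le_exp _
  have h2 : (|t| / 2 + 1) ^ 2 ≤ Real.exp |t| := by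
    have hsq := mul_self_le_mul_self (by positivity) h1
    have : Real.exp (|t| / 2) * Real.exp (|t| / 2) = Real.exp |t| := by
      rw [← Real.exp_add]; ring_nf
    nlinarith
  have h3 : 1 - |t| ≤ Real.exp (-|t|) := by
    have := Real.add_one_le_exp (-|t|); linarith
  have habs : Real.cosh |t| = Real.cosh t := Real.cosh_abs t
  rw [← habs, Real.cosh_eq]
  nlinarith [sq_abs t]

lemma cosh_upper (t : ℝ) (h0 : 0 ≤ t) (h1 : t ≤ 1) : Real.cosh t ≤ 1 + t ^ 2 := by
  have h := Real.cosh_le_exp_half_sq t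
  set s : ℝ := t ^ 2 / 2 with hs_def
  have hs0 : 0 ≤ s := by positivity
  have hs : s ≤ 1 / 2 := by rw [hs_def]; nlinarith
  have hneg : 1 - s ≤ Real.exp (-s) := by
    have := Real.add_one_le_exp (-s); linarith
  have hmul : Real.exp s * (1 - s) ≤ 1 := by
    calc Real.exp s * (1 - s) ≤ Real.exp s * Real.exp (-s) :=
          mul_le_mul_of_nonneg_left hneg (Real.exp_pos _).le
      _ = 1 := by rw [← Real.exp_add]; simp
  have hexp : Real.exp s ≤ 1 + 2 * s := by
    nlinarith [Real.exp_pos s]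
  calc Real.cosh t ≤ Real.exp s := h
    _ ≤ 1 + 2 * s := hexp
    _ = 1 + t ^ 2 := by rw [hs_def]; ring

lemma besselK_integrable {α x : ℝ} (hα0 : 0 ≤ α) (hα1 : α ≤ 1) (hx : 0 < x) :
    IntegrableOn (fun t => Real.exp (-x * Real.cosh t) * Real.cosh (α * t))
      (Set.Ioi (0 : ℝ)) := by
  have hg : IntegrableOn (fun t => Real.exp (8 / x) * Real.exp (-(1 : ℝ) * t))
      (Set.Ioi (0 : ℝ)) := (exp_neg_integrableOn_Ioi 0 one_pos).const_mul _
  refine hg.mono' ?_ ?_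
  · exact ((Real.continuous_exp.comp (continuous_const.mul Real.continuous_cosh)).mul
      (Real.continuous_cosh.comp (continuous_const.mul continuous_id))).aestronglyMeasurable
  · filter_upwards [ae_restrict_mem measurableSet_Ioi] with t ht
    have ht0 : (0:ℝ) < t := ht
    have hfnn : 0 ≤ Real.exp (-x * Real.cosh t) * Real.cosh (α * t) :=
      mul_nonneg (Real.exp_pos _).le (by positivity)
    rw [Real.norm_eq_abs, abs_of_nonneg hfnn]
    have hc1 : Real.cosh (α * t) ≤ Real.cosh t := by
      rw [Real.cosh_le_cosh, abs_mul, abs_of_nonneg hα0, abs_of_nonneg ht0.le]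
      nlinarith
    have hc2 : Real.cosh t ≤ Real.exp t := by
      rw [Real.cosh_eq]
      have : Real.exp (-t) ≤ Real.exp t := Real.exp_le_exp.2 (by linarith)
      linarith
    calc Real.exp (-x * Real.cosh t) * Real.cosh (α * t)
        ≤ Real.exp (-x * Real.cosh t) * Real.exp t :=
          mul_le_mul_of_nonneg_left (hc1.trans hc2) (Real.exp_pos _).le
      _ = Real.exp (t - x * Real.cosh t) := by rw [← Real.exp_add]; ring_nf
      _ ≤ Real.exp (8 / x) * Real.exp (-(1:ℝ) * t) := by
          rw [← Real.exp_add]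
          apply Real.exp_le_exp.2
          have hcl := cosh_lower t
          have hmul : x * (1 + t ^ 2 / 8) ≤ x * Real.cosh t :=
            mul_le_mul_of_nonneg_left hcl hx.le
          have key : 2 * t ≤ x * (1 + t ^ 2 / 8) + 8 / x := by
            have expand : x * (1 + t ^ 2 / 8) + 8 / x - 2 * t
                = x + (x * t - 8) ^ 2 / (8 * x) := by
              field_simp; ring
            nlinarith [sq_nonneg (x * t - 8),
              div_nonneg (sq_nonneg (x*t-8)) (by positivity : (0:ℝ) ≤ 8 * x)]
          linarith

lemma besselK_pos {α x : ℝ} (hα0 : 0 ≤ α) (hα1 : α ≤ 1) (hx : 0 < x) :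
    0 < besselK α x := by
  rw [besselK, setIntegral_pos_iff_support_of_nonneg_ae ?_ (besselK_integrable hα0 hα1 hx)]
  · have hsupp : Function.support
        (fun t => Real.exp (-x * Real.cosh t) * Real.cosh (α * t)) ∩ Set.Ioi (0:ℝ)
        = Set.Ioi (0:ℝ) := by
      apply Set.inter_eq_right.mpr
      intro t _
      have : 0 < Real.exp (-x * Real.cosh t) * Real.cosh (α * t) :=
        mul_pos (Real.exp_pos _) (lt_of_lt_of_le one_pos (Real.one_le_cosh _))
      exact ne_of_gt this
    rw [hsupp, Real.volume_Ioi]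
    exact ENNReal.zero_lt_top
  · filter_upwards with t
    exact mul_nonneg (Real.exp_pos _).le (by positivity)

lemma besselK_zero_upper {x : ℝ} (hx : 0 < x) :
    besselK 0 x ≤ Real.sqrt (2 * Real.pi) * Real.exp (-x) / Real.sqrt x := by
  have hint := besselK_integrable (α := 0) (x := x) le_rfl zero_le_one hx
  have hgauss : IntegrableOn (fun t => Real.exp (-x) * Real.exp (-(x/8) * t ^ 2))
      (Set.Ioi (0:ℝ)) := by
    apply Integrable.const_mul
    exact (integrable_exp_neg_mul_sq (by positivity : (0:ℝ) < x / 8)).integrableOn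
  have hle : besselK 0 x ≤ ∫ t in Set.Ioi (0:ℝ),
      Real.exp (-x) * Real.exp (-(x/8) * t ^ 2) := by
    rw [besselK]
    apply setIntegral_mono_on hint hgauss measurableSet_Ioi
    intro t _
    have hcl := cosh_lower t
    calc Real.exp (-x * Real.cosh t) * Real.cosh (0 * t)
        = Real.exp (-x * Real.cosh t) := by simp
      _ ≤ Real.exp (-x * (1 + t ^ 2 / 8)) := by
          apply Real.exp_le_exp.2; nlinarith
      _ = Real.exp (-x) * Real.exp (-(x/8) * t ^ 2) := by
          rw [← Real.exp_add]; ring_nf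
  have hval : ∫ t in Set.Ioi (0:ℝ), Real.exp (-x) * Real.exp (-(x/8) * t ^ 2)
      = Real.exp (-x) * (Real.sqrt (Real.pi / (x/8)) / 2) := by
    rw [integral_const_mul, integral_gaussian_Ioi]
  have hsqrt : Real.sqrt (Real.pi / (x/8)) / 2 = Real.sqrt (2 * Real.pi) / Real.sqrt x := by
    have h1 : Real.pi / (x/8) = 4 * (2 * Real.pi) / x := by ring
    rw [h1, Real.sqrt_div (by positivity) x, Real.sqrt_mul (by norm_num : (0:ℝ) ≤ 4),
      show Real.sqrt 4 = 2 by
        rw [show (4:ℝ) = 2 ^ 2 by norm_num, Real.sqrt_sq (by norm_num : (0:ℝ) ≤ 2)]]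
    ring
  rw [hval, hsqrt] at hle
  calc besselK 0 x ≤ Real.exp (-x) * (Real.sqrt (2 * Real.pi) / Real.sqrt x) := hle
    _ = Real.sqrt (2 * Real.pi) * Real.exp (-x) / Real.sqrt x := by ring

lemma besselK_one_lower {y : ℝ} (hy : 0 < y) :
    min 1 (1 / Real.sqrt y) * (Real.exp (-1) * Real.exp (-y)) ≤ besselK 1 y := by
  set T : ℝ := min 1 (1 / Real.sqrt y) with hT_def
  have hsy : 0 < Real.sqrt y := Real.sqrt_pos.mpr hy
  have hT0 : 0 < T := lt_min one_pos (by positivity)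
  have hT1 : T ≤ 1 := min_le_left _ _
  have hyT : y * T ^ 2 ≤ 1 := by
    rcases le_or_gt 1 (1 / Real.sqrt y) with h | h
    · have hTeq : T = 1 := min_eq_left h
      rw [hTeq]
      have h1 : Real.sqrt y ≤ 1 := by
        rw [le_div_iff₀ hsy, one_mul] at h; exact h
      have : y ≤ 1 := by nlinarith [Real.sq_sqrt hy.le]
      linarith
    · have hTeq : T = 1 / Real.sqrt y := min_eq_right h.le
      rw [hTeq]
      have hpow : (1 / Real.sqrt y) ^ 2 = 1 / y := by
        rw [div_pow, one_pow, Real.sq_sqrt hy.le]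
      rw [hpow]
      field_simp
      exact le_rfl
  have hint := besselK_integrable (α := 1) (x := y) zero_le_one le_rfl hy
  have hnn : 0 ≤ᵐ[volume.restrict (Set.Ioi (0:ℝ))]
      fun t => Real.exp (-y * Real.cosh t) * Real.cosh (1 * t) := by
    filter_upwards with t
    exact mul_nonneg (Real.exp_pos _).le (by positivity)
  have hsub : (Set.Ioo (0:ℝ) T) ≤ᵐ[volume] Set.Ioi (0:ℝ) :=
    HasSubset.Subset.eventuallyLE Set.Ioo_subset_Ioi_self
  have hstep1 : ∫ t in Set.Ioo (0:ℝ) T,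
      Real.exp (-y * Real.cosh t) * Real.cosh (1 * t) ≤ besselK 1 y := by
    rw [besselK]
    exact setIntegral_mono_set hint hnn hsub
  have hconst : ∫ t in Set.Ioo (0:ℝ) T, Real.exp (-y * (1 + T ^ 2))
      = T * Real.exp (-y * (1 + T ^ 2)) := by
    rw [setIntegral_const, measureReal_def, Real.volume_Ioo, smul_eq_mul,
      ENNReal.toReal_ofReal (by linarith : (0:ℝ) ≤ T - 0)]
    ring_nf
  have hstep2 : ∫ t in Set.Ioo (0:ℝ) T, Real.exp (-y * (1 + T ^ 2))
      ≤ ∫ t in Set.Ioo (0:ℝ) T, Real.exp (-y * Real.cosh t) * Real.cosh (1 * t) := by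
    apply setIntegral_mono_on
    · exact integrableOn_const (by rw [Real.volume_Ioo]; exact ENNReal.ofReal_ne_top)
    · exact hint.mono_set Set.Ioo_subset_Ioi_self
    · exact measurableSet_Ioo
    · intro t ht
      have ht0 : 0 < t := ht.1
      have htT : t < T := ht.2
      have hcosh_le : Real.cosh t ≤ 1 + T ^ 2 := by
        calc Real.cosh t ≤ Real.cosh T := by
              rw [Real.cosh_le_cosh, abs_of_nonneg ht0.le, abs_of_nonneg hT0.le]
              exact htT.le
          _ ≤ 1 + T ^ 2 := cosh_upper T hT0.le hT1
      calc Real.exp (-y * (1 + T ^ 2)) ≤ Real.exp (-y * Real.cosh t) := by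
            apply Real.exp_le_exp.2; nlinarith
        _ = Real.exp (-y * Real.cosh t) * 1 := (mul_one _).symm
        _ ≤ Real.exp (-y * Real.cosh t) * Real.cosh (1 * t) :=
            mul_le_mul_of_nonneg_left (Real.one_le_cosh _) (Real.exp_pos _).le
  have hfinal : T * (Real.exp (-1) * Real.exp (-y)) ≤ T * Real.exp (-y * (1 + T ^ 2)) := by
    apply mul_le_mul_of_nonneg_left _ hT0.le
    rw [← Real.exp_add]
    apply Real.exp_le_exp.2
    nlinarith
  calc T * (Real.exp (-1) * Real.exp (-y)) ≤ T * Real.exp (-y * (1 + T ^ 2)) := hfinal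
    _ = ∫ t in Set.Ioo (0:ℝ) T, Real.exp (-y * (1 + T ^ 2)) := hconst.symm
    _ ≤ ∫ t in Set.Ioo (0:ℝ) T, Real.exp (-y * Real.cosh t) * Real.cosh (1 * t) := hstep2
    _ ≤ besselK 1 y := hstep1

/-- Exponential spatial decay of the dispersive boundary-layer profile:
for fixed `R > 0` there is `C > 0` (depending only on `R`) such that for all
`κ ∈ (0,1]` and all `r ≥ 2R`,
`0 < K₀(r/κ)/K₁(R/κ) ≤ C·√(R/r)·e^{−(r−R)/κ}`. -/
theorem boundary_layer_decay (R : ℝ) (hR : 0 < R) :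
    ∃ C > (0 : ℝ), ∀ κ : ℝ, 0 < κ → κ ≤ 1 → ∀ r ≥ 2 * R,
      0 < besselK 0 (r / κ) / besselK 1 (R / κ) ∧
      besselK 0 (r / κ) / besselK 1 (R / κ) ≤
        C * Real.sqrt (R / r) * Real.exp (-(r - R) / κ) := by
  set m : ℝ := min 1 (Real.sqrt R) with hm_def
  have hm0 : 0 < m := lt_min one_pos (Real.sqrt_pos.mpr hR)
  refine ⟨Real.sqrt (2 * Real.pi) * Real.exp 1 / m, by positivity, ?_⟩
  intro κ hκ0 hκ1 r hr
  have hr0 : 0 < r := lt_of_lt_of_le (by linarith) hr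
  set x : ℝ := r / κ with hx_def
  set y : ℝ := R / κ with hy_def
  have hx0 : 0 < x := by positivity
  have hy0 : 0 < y := by positivity
  have hRy : R ≤ y := by
    rw [hy_def, le_div_iff₀ hκ0]; nlinarith
  have hK0pos := besselK_pos (α := 0) (x := x) le_rfl zero_le_one hx0
  have hK1pos := besselK_pos (α := 1) (x := y) zero_le_one le_rfl hy0
  refine ⟨div_pos hK0pos hK1pos, ?_⟩
  have hsy : 0 < Real.sqrt y := Real.sqrt_pos.mpr hy0
  have hTm : m / Real.sqrt y ≤ min 1 (1 / Real.sqrt y) := by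
    apply le_min
    · rw [div_le_one hsy]
      calc m ≤ Real.sqrt R := min_le_right _ _
        _ ≤ Real.sqrt y := Real.sqrt_le_sqrt hRy
    · exact div_le_div_of_nonneg_right (min_le_left _ _) hsy.le
  have hlow : m / Real.sqrt y * (Real.exp (-1) * Real.exp (-y)) ≤ besselK 1 y := by
    refine le_trans ?_ (besselK_one_lower hy0)
    apply mul_le_mul_of_nonneg_right hTm (by positivity)
  have hup := besselK_zero_upper hx0
  set B : ℝ := m / Real.sqrt y * (Real.exp (-1) * Real.exp (-y)) with hB_def
  have hB0 : 0 < B := by positivity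
  have hdiv : besselK 0 x / besselK 1 y
      ≤ (Real.sqrt (2 * Real.pi) * Real.exp (-x) / Real.sqrt x) / B :=
    div_le_div₀ (by positivity) hup hB0 hlow
  refine hdiv.trans (le_of_eq ?_)
  have hRr : R / r = y / x := by
    rw [hy_def, hx_def]
    field_simp
  have hsqrt_ratio : Real.sqrt (R / r) = Real.sqrt y / Real.sqrt x := by
    rw [hRr, Real.sqrt_div hy0.le]
  have hexp : Real.exp (-(r - R) / κ) = Real.exp (-x) * Real.exp y := by
    rw [← Real.exp_add]
    congr 1
    rw [hx_def, hy_def]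
    field_simp
    ring
  rw [hB_def, hsqrt_ratio, hexp, Real.exp_neg (1:ℝ), Real.exp_neg y]
  have hsx : 0 < Real.sqrt x := Real.sqrt_pos.mpr hx0
  have hex : Real.exp (-x) ≠ 0 := Real.exp_ne_zero _
  have he1 : Real.exp (1:ℝ) ≠ 0 := Real.exp_ne_zero _
  have hey : Real.exp y ≠ 0 := Real.exp_ne_zero _
  field_simp
end
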